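/- arXiv:1709.00134 — 8 statements merged into one kernel-verified Lean document; each statement's English description precedes it below -/
import Mathlib

section
/- Under logarithmic loss, the rate-distortion function of a discrete memoryless source X with entropy H(X) equals R(D) = H(X) − D for 0 ≤ D ≤ H(X): that is, the infimum of I(X;Q) over all conditional distributions P_{Q|X} with E[−log Q(X)] ≤ D equals H(X) − D. -/
open Real Finset

lemma gibbs_aux {α : Type*} [Fintype α] (a b : α → ℝ)
    (ha : ∀ x, 0 ≤ a x) (hb : ∀ x, 0 ≤ b x) (hb1 : ∑ x, b x ≤ 1)
    (hab : ∀ x, 0 < a x → 0 < b x) :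
    ∑ x, a x * (-Real.log (a x / ∑ x', a x')) ≤ ∑ x, a x * (-Real.log (b x)) := by
  set s := ∑ x', a x' with hs
  have hs0 : 0 ≤ s := Finset.sum_nonneg fun i _ => ha i
  have key : ∀ x, a x * (Real.log (b x) - Real.log (a x / s)) ≤ s * b x - a x := by
    intro x
    rcases eq_or_lt_of_le (ha x) with h | h
    · rw [← h]; simpa using mul_nonneg hs0 (hb x)
    · have hbx := hab x h
      have hsx : 0 < s := lt_of_lt_of_le h (Finset.single_le_sum (fun i _ => ha i) (mem_univ x))
      have ht : (0:ℝ) < b x * s / a x := by positivity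
      have hlog : Real.log (b x) - Real.log (a x / s) = Real.log (b x * s / a x) := by
        rw [Real.log_div (ne_of_gt h) (ne_of_gt hsx),
            Real.log_div (by positivity) (ne_of_gt h),
            Real.log_mul (ne_of_gt hbx) (ne_of_gt hsx)]
        ring
      rw [hlog]
      have h1 := Real.log_le_sub_one_of_pos ht
      have h2 : a x * Real.log (b x * s / a x) ≤ a x * (b x * s / a x - 1) :=
        mul_le_mul_of_nonneg_left h1 (le_of_lt h)
      have h3 : a x * (b x * s / a x - 1) = s * b x - a x := by
        field_simp
      linarith
  have h2 : ∑ x, a x * (Real.log (b x) - Real.log (a x / s)) ≤ ∑ x, (s * b x - a x) :=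
    Finset.sum_le_sum fun x _ => key x
  have h3 : ∑ x, (s * b x - a x) = s * (∑ x, b x) - s := by
    rw [Finset.sum_sub_distrib, ← Finset.mul_sum, ← hs]
  have h4 : s * (∑ x, b x) - s ≤ 0 := by nlinarith
  have he : ∑ x, a x * (-Real.log (b x)) - ∑ x, a x * (-Real.log (a x / s))
      = -∑ x, a x * (Real.log (b x) - Real.log (a x / s)) := by
    rw [← Finset.sum_sub_distrib, ← Finset.sum_neg_distrib]
    exact Finset.sum_congr rfl fun x _ => by ring
  linarith

/-- Under logarithmic loss, the rate-distortion function of a discrete source `X`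
is `R(D) = H(X) − D` for `0 ≤ D ≤ H(X)`: the infimum of `I(X;Q) = H(X) − H(X|Q)`
over joint distributions of `(X,Q)` (with `Q` a finitely-valued random pmf whose
values `φ m` have full support on the support of the joint) subject to
`E[−log Q(X)] ≤ D` equals `H(X) − D`. -/
theorem stmt_2 {α : Type*} [Fintype α]
    (pX : α → ℝ) (hp0 : ∀ x, 0 ≤ pX x) (hp1 : ∑ x, pX x = 1)
    (D : ℝ) (hD0 : 0 ≤ D) (hDH : D ≤ ∑ x, negMulLog (pX x)) :
    sInf { I : ℝ | ∃ (n : ℕ) (w : α → Fin n → ℝ) (φ : Fin n → α → ℝ),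
        (∀ x m, 0 ≤ w x m) ∧ (∀ x, ∑ m, w x m = pX x) ∧
        (∀ m, (∀ x, 0 ≤ φ m x) ∧ ∑ x, φ m x = 1) ∧
        (∀ x m, 0 < w x m → 0 < φ m x) ∧
        (∑ x, ∑ m, w x m * (-Real.log (φ m x)) ≤ D) ∧
        I = (∑ x, negMulLog (pX x))
            - ∑ m, ∑ x, w x m * (-Real.log (w x m / ∑ x', w x' m)) }
      = (∑ x, negMulLog (pX x)) - D := by
  classical
  set H := ∑ x, negMulLog (pX x) with hHdef
  set S := { I : ℝ | ∃ (n : ℕ) (w : α → Fin n → ℝ) (φ : Fin n → α → ℝ),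
        (∀ x m, 0 ≤ w x m) ∧ (∀ x, ∑ m, w x m = pX x) ∧
        (∀ m, (∀ x, 0 ≤ φ m x) ∧ ∑ x, φ m x = 1) ∧
        (∀ x m, 0 < w x m → 0 < φ m x) ∧
        (∑ x, ∑ m, w x m * (-Real.log (φ m x)) ≤ D) ∧
        I = H - ∑ m, ∑ x, w x m * (-Real.log (w x m / ∑ x', w x' m)) } with hSdef
  -- lower bound
  have hlb : ∀ I ∈ S, H - D ≤ I := by
    rintro I ⟨n, w, φ, hw0, hwsum, hφ, hwφ, hdist, hI⟩
    have key : ∑ m, ∑ x, w x m * (-Real.log (w x m / ∑ x', w x' m)) ≤ D := by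
      have step : ∀ m, ∑ x, w x m * (-Real.log (w x m / ∑ x', w x' m))
          ≤ ∑ x, w x m * (-Real.log (φ m x)) := fun m =>
        gibbs_aux (fun x => w x m) (φ m) (fun x => hw0 x m) (hφ m).1
          (le_of_eq (hφ m).2) (fun x h => hwφ x m h)
      calc ∑ m, ∑ x, w x m * (-Real.log (w x m / ∑ x', w x' m))
          ≤ ∑ m, ∑ x, w x m * (-Real.log (φ m x)) := Finset.sum_le_sum fun m _ => step m
        _ = ∑ x, ∑ m, w x m * (-Real.log (φ m x)) := Finset.sum_comm
        _ ≤ D := hdist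
    rw [hI]; linarith
  -- achievability
  have hH0 : 0 ≤ H := le_trans hD0 hDH
  set t : ℝ := if H = 0 then 0 else D / H with htdef
  have htH : t * H = D := by
    rcases eq_or_ne H 0 with h | h
    · have hD : D = 0 := le_antisymm (h ▸ hDH) hD0
      rw [htdef, if_pos h, h, hD, mul_zero]
    · rw [htdef, if_neg h, div_mul_cancel₀ _ h]
  have ht0 : 0 ≤ t := by
    rcases eq_or_ne H 0 with h | h
    · rw [htdef, if_pos h]
    · rw [htdef, if_neg h]
      have : 0 < H := lt_of_le_of_ne hH0 (Ne.symm h)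
      positivity
  have ht1 : t ≤ 1 := by
    rcases eq_or_ne H 0 with h | h
    · rw [htdef, if_pos h]; norm_num
    · have hHpos : 0 < H := lt_of_le_of_ne hH0 (Ne.symm h)
      rw [htdef, if_neg h, div_le_one hHpos]; exact hDH
  set e : Fin (Fintype.card α) ≃ α := (Fintype.equivFin α).symm with hedef
  have hmem : H - D ∈ S := by
    refine ⟨Fintype.card α + 1,
      fun x m => Fin.cases (t * pX x) (fun i => if x = e i then (1 - t) * pX x else 0) m,
      fun m => Fin.cases (fun y => pX y) (fun i y => if y = e i then 1 else 0) m,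
      ?_, ?_, ?_, ?_, ?_, ?_⟩
    · intro x m
      induction m using Fin.cases with
      | zero =>
        simp only [Fin.cases_zero]
        exact mul_nonneg ht0 (hp0 x)
      | succ i =>
        simp only [Fin.cases_succ]
        split
        · nlinarith [hp0 x]
        · exact le_rfl
    · intro x
      rw [Fin.sum_univ_succ]
      simp only [Fin.cases_zero, Fin.cases_succ]
      have hsum : ∑ i : Fin (Fintype.card α), (if x = e i then (1 - t) * pX x else 0)
          = (1 - t) * pX x := by
        simp_rw [← e.symm_apply_eq]
        simp [Finset.sum_ite_eq]
      rw [hsum]; ring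
    · intro m
      induction m using Fin.cases with
      | zero => exact ⟨hp0, hp1⟩
      | succ i =>
        refine ⟨fun y => by simp only [Fin.cases_succ]; split <;> norm_num, ?_⟩
        simp only [Fin.cases_succ]
        simp [Finset.sum_ite_eq']
    · intro x m
      induction m using Fin.cases with
      | zero =>
        simp only [Fin.cases_zero]
        intro h
        by_contra h'
        push_neg at h'
        have hx : pX x = 0 := le_antisymm h' (hp0 x)
        rw [hx, mul_zero] at h
        exact lt_irrefl 0 h
      | succ i =>
        simp only [Fin.cases_succ]
        intro h
        split at h
        · next heq => simp [heq]
        · exact absurd h (lt_irrefl 0)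
    · -- distortion = D
      have hx : ∀ x : α, ∑ m : Fin (Fintype.card α + 1),
          (Fin.cases (t * pX x) (fun i => if x = e i then (1 - t) * pX x else 0) m : ℝ) *
            (-Real.log ((Fin.cases (motive := fun _ => α → ℝ) (fun y => pX y)
              (fun i y => if y = e i then 1 else 0) m) x))
          = t * negMulLog (pX x) := by
        intro x
        rw [Fin.sum_univ_succ]
        simp only [Fin.cases_zero, Fin.cases_succ]
        have h2 : ∀ i : Fin (Fintype.card α),
            (if x = e i then (1 - t) * pX x else 0) *
              (-Real.log (if x = e i then (1:ℝ) else 0)) = 0 := by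
          intro i; split <;> simp
        rw [Finset.sum_congr rfl fun i _ => h2 i]
        simp [negMulLog]; ring
      rw [Finset.sum_congr rfl fun x _ => hx x, ← Finset.mul_sum, ← hHdef, htH]
    · -- value of I
      have hm0 : ∑ x, (t * pX x) * (-Real.log ((t * pX x) / ∑ x', t * pX x')) = D := by
        rcases eq_or_ne t 0 with h | h
        · have hD : D = 0 := by rw [← htH, h, zero_mul]
          simp [h, hD]
        · have hsum : ∑ x', t * pX x' = t := by rw [← Finset.mul_sum, hp1, mul_one]
          rw [hsum]
          have hterm : ∀ x, (t * pX x) * (-Real.log ((t * pX x) / t)) = t * negMulLog (pX x) := by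
            intro x
            rw [mul_comm t (pX x), mul_div_assoc, div_self h, mul_one]
            simp [negMulLog]; ring
          rw [Finset.sum_congr rfl fun x _ => hterm x, ← Finset.mul_sum, ← hHdef, htH]
      have hmsucc : ∀ i : Fin (Fintype.card α),
          ∑ x, (if x = e i then (1 - t) * pX x else 0) *
            (-Real.log ((if x = e i then (1 - t) * pX x else 0) /
              ∑ x', (if x' = e i then (1 - t) * pX x' else 0))) = 0 := by
        intro i
        apply Finset.sum_eq_zero
        intro x _
        rcases eq_or_ne x (e i) with h | h
        · have hs : ∑ x', (if x' = e i then (1 - t) * pX x' else 0) = (1 - t) * pX (e i) := by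
            simp [Finset.sum_ite_eq']
          rw [hs]
          rcases eq_or_ne ((1 - t) * pX (e i)) 0 with hc | hc
          · simp [h, hc]
          · rw [if_pos h, h, div_self hc]
            simp
        · simp [h]
      rw [Fin.sum_univ_succ]
      simp only [Fin.cases_zero, Fin.cases_succ]
      rw [hm0, Finset.sum_congr rfl fun i _ => hmsucc i]
      simp
  exact le_antisymm (csInf_le ⟨H - D, fun y hy => hlb y hy⟩ hmem) (le_csInf ⟨H - D, hmem⟩ hlb)
end

section
/- If a conditional distribution P_{Q|X} (with Q a random pmf on 𝒳) achieves the log-loss rate-distortion function at distortion D, i.e., I(X;Q) = H(X) − D and E[−log Q(X)] ≤ D, then P_{X|Q}(·|q) = q for P_Q-almost every q, and H(X|Q) = D. -/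
open Real Finset

/-
Proof idea: for each index `b`, with `s b = ∑ x, w x b`, Gibbs' inequality applied to the
weights `w · b` and `s b • φ b` gives `∑ x, w x b * (-log (w x b / s b)) ≤ ∑ x, w x b * (-log (φ b x))`,
with equality only if `w · b = s b • φ b`. Summing over `b`, the left side is `H(X|Q) = D` and the
right side is `E[-log Q(X)] ≤ D`, so equality holds for every `b`.
-/

namespace Real

section Gibbs

variable {f g : ℝ}

lemma mul_log_div_le_sub (hf : 0 ≤ f) (hg : 0 ≤ g) (hfg : 0 < f → 0 < g) :
    f * log (g / f) ≤ g - f := by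
  rcases hf.eq_or_lt with rfl | hf
  · simpa using hg
  · have hlog := log_le_sub_one_of_pos (div_pos (hfg hf) hf)
    calc f * log (g / f) ≤ f * (g / f - 1) := mul_le_mul_of_nonneg_left hlog hf.le
      _ = g - f := by field_simp

lemma mul_log_div_eq_sub_iff (hf : 0 ≤ f) (hfg : 0 < f → 0 < g) :
    f * log (g / f) = g - f ↔ f = g := by
  refine ⟨fun heq => ?_, fun h => by simp [h]⟩
  rcases hf.eq_or_lt with rfl | hf
  · simpa using heq
  · by_contra hne
    have hratio : g / f ≠ 1 := fun h => hne ((div_eq_one_iff_eq hf.ne').mp h).symm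
    have hlog := log_lt_sub_one_of_pos (div_pos (hfg hf) hf) hratio
    have : f * log (g / f) < f * (g / f - 1) := mul_lt_mul_of_pos_left hlog hf
    rw [heq] at this
    field_simp at this
    exact lt_irrefl _ this

variable {ι : Type*} (s : Finset ι) {f g : ι → ℝ}

theorem sum_mul_log_div_le_sum_sub (hf : ∀ i ∈ s, 0 ≤ f i) (hg : ∀ i ∈ s, 0 ≤ g i)
    (hfg : ∀ i ∈ s, 0 < f i → 0 < g i) :
    ∑ i ∈ s, f i * log (g i / f i) ≤ ∑ i ∈ s, (g i - f i) :=
  sum_le_sum fun i hi => mul_log_div_le_sub (hf i hi) (hg i hi) (hfg i hi)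

theorem sum_mul_log_div_eq_sum_sub_iff (hf : ∀ i ∈ s, 0 ≤ f i) (hg : ∀ i ∈ s, 0 ≤ g i)
    (hfg : ∀ i ∈ s, 0 < f i → 0 < g i) :
    ∑ i ∈ s, f i * log (g i / f i) = ∑ i ∈ s, (g i - f i) ↔ ∀ i ∈ s, f i = g i := by
  rw [sum_eq_sum_iff_of_le fun i hi => mul_log_div_le_sub (hf i hi) (hg i hi) (hfg i hi)]
  exact forall₂_congr fun i hi => mul_log_div_eq_sub_iff (hf i hi) (hfg i hi)

end Gibbs

end Real

section Normalize

variable {α : Type*} [Fintype α] {p q : α → ℝ}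

lemma sum_mul_pos_of_pos (hp : ∀ x, 0 ≤ p x) (hpq : ∀ x, 0 < p x → 0 < q x) (x : α)
    (hx : 0 < p x) : 0 < (∑ y, p y) * q x :=
  mul_pos (hx.trans_le (single_le_sum (fun y _ => hp y) (mem_univ x))) (hpq x hx)

lemma sum_mul_neg_log_sub_sum_mul_neg_log_normalize (hp : ∀ x, 0 ≤ p x)
    (hq1 : ∑ x, q x = 1) (hpq : ∀ x, 0 < p x → 0 < q x) :
    ∑ x, p x * (-log (q x)) - ∑ x, p x * (-log (p x / ∑ y, p y))
      = -(∑ x, p x * log ((∑ y, p y) * q x / p x))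
        + ∑ x, ((∑ y, p y) * q x - p x) := by
  have hmass : ∑ x, ((∑ y, p y) * q x - p x) = 0 := by
    rw [sum_sub_distrib, ← mul_sum, hq1, mul_one, sub_self]
  rw [hmass, add_zero, ← sum_sub_distrib, ← sum_neg_distrib]
  refine sum_congr rfl fun x _ => ?_
  rcases (hp x).eq_or_lt with h0 | h0
  · simp [← h0]
  · have hS : 0 < ∑ y, p y := h0.trans_le (single_le_sum (fun y _ => hp y) (mem_univ x))
    rw [log_div (sum_mul_pos_of_pos hp hpq x h0).ne' h0.ne', log_div h0.ne' hS.ne',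
      log_mul hS.ne' (hpq x h0).ne']
    ring

lemma sum_mul_neg_log_normalize_le (hp : ∀ x, 0 ≤ p x) (hq0 : ∀ x, 0 ≤ q x)
    (hq1 : ∑ x, q x = 1) (hpq : ∀ x, 0 < p x → 0 < q x) :
    ∑ x, p x * (-log (p x / ∑ y, p y)) ≤ ∑ x, p x * (-log (q x)) := by
  have hgibbs := sum_mul_log_div_le_sum_sub univ (f := p) (g := fun x => (∑ y, p y) * q x)
    (fun x _ => hp x) (fun x _ => mul_nonneg (sum_nonneg fun y _ => hp y) (hq0 x))
    (fun x _ => sum_mul_pos_of_pos hp hpq x)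
  linarith [sum_mul_neg_log_sub_sum_mul_neg_log_normalize hp hq1 hpq]

lemma eq_mul_of_sum_mul_neg_log_normalize_eq (hp : ∀ x, 0 ≤ p x) (hq0 : ∀ x, 0 ≤ q x)
    (hq1 : ∑ x, q x = 1) (hpq : ∀ x, 0 < p x → 0 < q x)
    (heq : ∑ x, p x * (-log (p x / ∑ y, p y)) = ∑ x, p x * (-log (q x))) (x : α) :
    p x = (∑ y, p y) * q x := by
  have hgibbs := (sum_mul_log_div_eq_sum_sub_iff univ (f := p)
    (g := fun x => (∑ y, p y) * q x) (fun x _ => hp x)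
    (fun x _ => mul_nonneg (sum_nonneg fun y _ => hp y) (hq0 x))
    (fun x _ => sum_mul_pos_of_pos hp hpq x)).mp
  exact hgibbs (by linarith [sum_mul_neg_log_sub_sum_mul_neg_log_normalize hp hq1 hpq]) x (mem_univ x)

end Normalize

theorem stmt_3_general {α β : Type*} [Fintype α] [Fintype β]
    (w : α → β → ℝ)                    -- joint pmf of (X, Q), Q indexed by β
    (hw0 : ∀ x b, 0 ≤ w x b)
    (φ : β → α → ℝ)                    -- the pmf value of Q at index b
    (hφ0 : ∀ b x, 0 ≤ φ b x) (hφ1 : ∀ b, ∑ x, φ b x = 1)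
    (hsupp : ∀ x b, 0 < w x b → 0 < φ b x)
    (D : ℝ)
    -- I(X;Q) = H(X) − H(X|Q) equals H(X) − D:
    (hI : (∑ x, negMulLog (∑ b, w x b))
        - (∑ b, ∑ x, w x b * (-Real.log (w x b / ∑ x', w x' b)))
        = (∑ x, negMulLog (∑ b, w x b)) - D)
    -- E[−log Q(X)] ≤ D:
    (hE : ∑ x, ∑ b, w x b * (-Real.log (φ b x)) ≤ D) :
    (∀ b, 0 < ∑ x, w x b → ∀ x, w x b / (∑ x', w x' b) = φ b x) ∧
    (∑ b, ∑ x, w x b * (-Real.log (w x b / ∑ x', w x' b)) = D) := by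
  have hcond : ∑ b, ∑ x, w x b * (-log (w x b / ∑ x', w x' b)) = D := by linarith
  have hle : ∀ b ∈ univ, ∑ x, w x b * (-log (w x b / ∑ x', w x' b))
      ≤ ∑ x, w x b * (-log (φ b x)) := fun b _ =>
    sum_mul_neg_log_normalize_le (fun x => hw0 x b) (hφ0 b) (hφ1 b) (fun x => hsupp x b)
  have heq := (sum_eq_sum_iff_of_le hle).mp <|
    (sum_le_sum hle).antisymm (by rw [hcond, ← sum_comm]; exact hE)
  refine ⟨fun b hb x => ?_, hcond⟩
  rw [eq_mul_of_sum_mul_neg_log_normalize_eq (fun x => hw0 x b) (hφ0 b) (hφ1 b)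
    (fun x => hsupp x b) (heq b (mem_univ b)) x]
  field_simp

/-- If a conditional distribution `P_{Q|X}` (joint `w`, with `Q` taking pmf values
`φ b`) achieves the log-loss rate-distortion function at level `D`, i.e.
`I(X;Q) = H(X) − D` and `E[−log Q(X)] ≤ D`, then `P_{X|Q}(·|q) = q` for every `q`
of positive probability, and `H(X|Q) = D`. -/
theorem stmt_3 {α β : Type*} [Fintype α] [Fintype β]
    (w : α → β → ℝ)                    -- joint pmf of (X, Q), Q indexed by β
    (hw0 : ∀ x b, 0 ≤ w x b) (hw1 : ∑ x, ∑ b, w x b = 1)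
    (φ : β → α → ℝ)                    -- the pmf value of Q at index b
    (hφ0 : ∀ b x, 0 ≤ φ b x) (hφ1 : ∀ b, ∑ x, φ b x = 1)
    (hsupp : ∀ x b, 0 < w x b → 0 < φ b x)
    (D : ℝ)
    -- I(X;Q) = H(X) − H(X|Q) equals H(X) − D:
    (hI : (∑ x, negMulLog (∑ b, w x b))
        - (∑ b, ∑ x, w x b * (-Real.log (w x b / ∑ x', w x' b)))
        = (∑ x, negMulLog (∑ b, w x b)) - D)
    -- E[−log Q(X)] ≤ D:
    (hE : ∑ x, ∑ b, w x b * (-Real.log (φ b x)) ≤ D) :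
    (∀ b, 0 < ∑ x, w x b → ∀ x, w x b / (∑ x', w x' b) = φ b x) ∧
    (∑ b, ∑ x, w x b * (-Real.log (w x b / ∑ x', w x' b)) = D) :=
  stmt_3_general w hw0 φ hφ0 hφ1 hsupp D hI hE
end

section
/- Conversely, if a joint distribution of (X, Q), with Q a random pmf on 𝒳, satisfies P_{X|Q}(·|q) = q for P_Q-almost every q, and H(X|Q) = D, then I(X;Q) = H(X) − D and E[−log Q(X)] = D; that is, P_{Q|X} achieves the log-loss rate-distortion function at distortion level D. -/
open Real Finset

/-- Conversely, if the joint distribution of `(X,Q)` satisfies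
`P_{X|Q}(·|q) = q` for every `q` of positive probability and `H(X|Q) = D`, then
`I(X;Q) = H(X) − D` and `E[−log Q(X)] = D`, i.e., it achieves the log-loss
rate-distortion function at level `D`. -/
theorem stmt_4 {α β : Type*} [Fintype α] [Fintype β]
    (w : α → β → ℝ)                    -- joint pmf of (X, Q), Q indexed by β
    (hw0 : ∀ x b, 0 ≤ w x b) (hw1 : ∑ x, ∑ b, w x b = 1)
    (φ : β → α → ℝ)                    -- the pmf value of Q at index b
    (hφ0 : ∀ b x, 0 ≤ φ b x) (hφ1 : ∀ b, ∑ x, φ b x = 1)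
    (D : ℝ)
    -- consistency: P_{X|Q}(·|q) = q for every q of positive probability
    (hcons : ∀ b, 0 < ∑ x, w x b → ∀ x, w x b = (∑ x', w x' b) * φ b x)
    -- H(X|Q) = D
    (hH : ∑ b, ∑ x, w x b * (-Real.log (w x b / ∑ x', w x' b)) = D) :
    -- I(X;Q) = H(X) − D
    (∑ x, ∑ b, w x b * Real.log (w x b / ((∑ b', w x b') * (∑ x', w x' b)))
        = (∑ x, negMulLog (∑ b, w x b)) - D) ∧
    -- E[−log Q(X)] = D
    (∑ x, ∑ b, w x b * (-Real.log (φ b x)) = D) := by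
  classical
  have hmpos : ∀ x b, 0 < w x b → 0 < ∑ x', w x' b := fun x b hw =>
    lt_of_lt_of_le hw (Finset.single_le_sum (fun i _ => hw0 i b) (Finset.mem_univ x))
  have hppos : ∀ x b, 0 < w x b → 0 < ∑ b', w x b' := fun x b hw =>
    lt_of_lt_of_le hw (Finset.single_le_sum (fun i _ => hw0 x i) (Finset.mem_univ b))
  have hD : ∑ x, ∑ b, w x b * Real.log (w x b / ∑ x', w x' b) = -D := by
    rw [← hH, Finset.sum_comm]
    simp [Finset.sum_neg_distrib, mul_neg]
  constructor
  · have key : ∀ x b, w x b * Real.log (w x b / ((∑ b', w x b') * (∑ x', w x' b)))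
        = w x b * Real.log (w x b / ∑ x', w x' b) - w x b * Real.log (∑ b', w x b') := by
      intro x b
      by_cases h : w x b = 0
      · simp [h]
      · have hw : 0 < w x b := lt_of_le_of_ne (hw0 x b) (Ne.symm h)
        have hm := hmpos x b hw
        have hp := hppos x b hw
        rw [Real.log_div h (by positivity), Real.log_div h (ne_of_gt hm),
          Real.log_mul (ne_of_gt hp) (ne_of_gt hm)]
        ring
    calc ∑ x, ∑ b, w x b * Real.log (w x b / ((∑ b', w x b') * (∑ x', w x' b)))
        = ∑ x, ∑ b, (w x b * Real.log (w x b / ∑ x', w x' b)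
            - w x b * Real.log (∑ b', w x b')) := by
          exact Finset.sum_congr rfl fun x _ => Finset.sum_congr rfl fun b _ => key x b
      _ = (∑ x, ∑ b, w x b * Real.log (w x b / ∑ x', w x' b))
            - ∑ x, (∑ b, w x b) * Real.log (∑ b', w x b') := by
          rw [← Finset.sum_sub_distrib]
          refine Finset.sum_congr rfl fun x _ => ?_
          rw [Finset.sum_sub_distrib, Finset.sum_mul]
      _ = (∑ x, negMulLog (∑ b, w x b)) - D := by
          rw [hD]
          simp [negMulLog]
          ring
  · rw [← hH, Finset.sum_comm]
    refine Finset.sum_congr rfl fun b _ => Finset.sum_congr rfl fun x _ => ?_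
    by_cases h : w x b = 0
    · simp [h]
    · have hw : 0 < w x b := lt_of_le_of_ne (hw0 x b) (Ne.symm h)
      have hm := hmpos x b hw
      have := hcons b hm x
      have hφ : φ b x = w x b / (∑ x', w x' b) := by
        field_simp
        linarith [this]
      rw [hφ]
end

section
/- In the setting of the previous correspondence, if D* = D*(M) is the minimum achievable expected distortion E[d(X,g(f(X)))] over all encoders f: 𝒳 → {1,…,M} and decoders g: {1,…,M} → 𝒳̂, then for every such (f,g), E[−log P*_{X|X̂}(X | g(f(X)))] ≥ H(X|X̂*), with equality if and only if (f,g) achieves E[d(X,g(f(X)))] = D*(M). -/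
open Real Finset

/-- If `D* = D*(M)` is the minimum achievable expected distortion with `M`
messages, then every scheme `(f,g)` has expected log loss (of the
corresponding scheme) at least `H(X|X̂*)`, with equality iff `(f,g)` achieves
expected distortion `D*(M)`. -/
theorem stmt_7 {α β : Type*} [Fintype α] [Fintype β] (M : ℕ) (hM : 0 < M)
    (pX : α → ℝ) (hp0 : ∀ x, 0 ≤ pX x) (hp1 : ∑ x, pX x = 1)
    (K : α → β → ℝ)                          -- P*_{X̂|X}
    (hK0 : ∀ x b, 0 ≤ K x b) (hK1 : ∀ x, ∑ b, K x b = 1)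
    (P : β → α → ℝ)                          -- induced conditional P*_{X|X̂}
    (hind : ∀ x b, pX x * K x b = (∑ x', pX x' * K x' b) * P b x)
    (d : α → β → ℝ) (lam Dstar : ℝ) (hlam : 0 < lam)
    -- D* is the minimum expected distortion over all M-message schemes:
    (hDstar : IsLeast { E : ℝ | ∃ (f : α → Fin M) (g : Fin M → β),
        E = ∑ x, pX x * d x (g (f x)) } Dstar)
    (j : α → ℝ)                              -- D*(M)-tilted information
    (hid : ∀ x b, -Real.log (P b x)
        = -Real.log (pX x) - j x + lam * d x b - lam * Dstar)
    (hEj : ∑ x, pX x * j x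
        = (∑ x, negMulLog (pX x))
          - ∑ b, ∑ x, pX x * K x b * (-Real.log (P b x))) :
    ∀ (f : α → Fin M) (g : Fin M → β),
      (∑ b, ∑ x, pX x * K x b * (-Real.log (P b x)))
          ≤ ∑ x, pX x * (-Real.log (P (g (f x)) x)) ∧
      (∑ x, pX x * (-Real.log (P (g (f x)) x))
            = ∑ b, ∑ x, pX x * K x b * (-Real.log (P b x))
        ↔ ∑ x, pX x * d x (g (f x)) = Dstar) := by
  intro f g
  set C : ℝ := ∑ b, ∑ x, pX x * K x b * (-Real.log (P b x)) with hC
  set Ed : ℝ := ∑ x, pX x * d x (g (f x)) with hEd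
  have hge : Dstar ≤ Ed := hDstar.2 ⟨f, g, rfl⟩
  have hkey : ∑ x, pX x * (-Real.log (P (g (f x)) x)) = C + lam * (Ed - Dstar) := by
    have h1 : ∑ x, pX x * (-Real.log (P (g (f x)) x))
        = ∑ x, (negMulLog (pX x) - pX x * j x + lam * (pX x * d x (g (f x)))
            - lam * Dstar * pX x) := by
      refine Finset.sum_congr rfl fun x _ => ?_
      rw [hid x (g (f x))]
      simp [negMulLog]
      ring
    rw [h1]
    simp only [Finset.sum_sub_distrib, Finset.sum_add_distrib, ← Finset.mul_sum]
    rw [← hEd, hEj, hp1]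
    ring
  constructor
  · rw [hkey]
    nlinarith
  · rw [hkey]
    constructor
    · intro h
      have : lam * (Ed - Dstar) = 0 := by linarith
      have : Ed - Dstar = 0 := by
        rcases mul_eq_zero.mp this with h' | h'
        · exact absurd h' (ne_of_gt hlam)
        · exact h'
      linarith
    · intro h
      have hEq : Ed = Dstar := h
      simp [hEq]
end

section
/- The minimum achievable expected logarithmic loss using M codewords with pmf-valued reconstructions is D*(M) = H(X) − max over functions f: 𝒳 → {1,…,M} of H(f(X)). -/
/-!
For an encoder `f` let `P_f` be the law of `f(X)`. Since
`log q(f x, x) = log (q(f x, x) P_f(f x)) - log P_f(f x)`, the expected loss of `(f, q)` is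
`H(X) - H(f(X))` plus the gap between the cross entropy of `p` against the weights
`q(f x, x) P_f(f x)` and the entropy of `p`. These weights have total mass at most one, so
Gibbs' inequality makes the gap nonnegative, and the conditional law of `X` given `f(X)` closes it.
-/

open Real Finset

namespace LogLossCoding

variable {α β : Type*} [Fintype α] [DecidableEq β]

noncomputable def entropy {ι : Type*} [Fintype ι] (p : ι → ℝ) : ℝ := ∑ i, negMulLog (p i)

def pushforward (p : α → ℝ) (f : α → β) (m : β) : ℝ := ∑ x with f x = m, p x

noncomputable def expectedLogLoss (p : α → ℝ) (f : α → β) (q : β → α → ℝ) : ℝ :=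
  ∑ x, p x * (-log (q (f x) x))

/-- The conditional law of `X` given `f(X) = m`; on an empty fiber any pmf will do, and we
take `p`. -/
noncomputable def condDecoder (p : α → ℝ) (f : α → β) (m : β) (x : α) : ℝ :=
  if pushforward p f m = 0 then p x else if f x = m then p x / pushforward p f m else 0

lemma mul_log_le_mul_log_add_sub {p b : ℝ} (hp : 0 ≤ p) (hb : 0 < b) :
    p * log b ≤ p * log p + (b - p) := by
  rcases hp.eq_or_lt with rfl | hp
  · simpa using hb.le
  have h := mul_le_mul_of_nonneg_left (log_le_sub_one_of_pos (div_pos hb hp)) hp.le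
  rw [log_div hb.ne' hp.ne', mul_sub, mul_sub, mul_one, mul_div_cancel₀ _ hp.ne'] at h
  linarith

lemma entropy_le_sum_mul_neg_log {ι : Type*} [Fintype ι] {p b : ι → ℝ} (hp : ∀ i, 0 ≤ p i)
    (hb : ∀ i, 0 < b i) (hsum : ∑ i, b i ≤ ∑ i, p i) :
    entropy p ≤ ∑ i, p i * (-log (b i)) := by
  have h := sum_le_sum fun i (_ : i ∈ univ) => mul_log_le_mul_log_add_sub (hp i) (hb i)
  simp only [entropy, negMulLog, sum_add_distrib, sum_sub_distrib] at h ⊢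
  simp only [mul_neg, neg_mul, sum_neg_distrib]
  linarith

lemma sum_comp_eq_sum_fiberwise [Fintype β] {M : Type*} [AddCommMonoid M] (f : α → β)
    (h : β → α → M) : ∑ x, h (f x) x = ∑ m, ∑ x with f x = m, h m x := by
  rw [← sum_fiberwise univ f]
  exact sum_congr rfl fun m _ => sum_congr rfl fun x hx => by rw [(mem_filter.mp hx).2]

lemma sum_mul_comp_eq_sum_pushforward_mul [Fintype β] (p : α → ℝ) (f : α → β) (g : β → ℝ) :
    ∑ x, p x * g (f x) = ∑ m, pushforward p f m * g m :=
  (sum_comp_eq_sum_fiberwise f fun m x => p x * g m).trans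
    (sum_congr rfl fun _ _ => (sum_mul _ _ _).symm)

lemma sum_pushforward [Fintype β] (p : α → ℝ) (f : α → β) : ∑ m, pushforward p f m = ∑ x, p x :=
  sum_fiberwise univ f p

lemma pushforward_pos {p : α → ℝ} (hp : ∀ x, 0 < p x) (f : α → β) (x : α) :
    0 < pushforward p f (f x) :=
  sum_pos (fun y _ => hp y) ⟨x, by simp⟩

lemma sum_mul_log_pushforward_comp [Fintype β] (p : α → ℝ) (f : α → β) :
    ∑ x, p x * log (pushforward p f (f x)) = -entropy (pushforward p f) := by
  rw [sum_mul_comp_eq_sum_pushforward_mul p f (fun m => log (pushforward p f m)), entropy,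
    ← sum_neg_distrib]
  simp only [negMulLog, neg_mul, neg_neg]

lemma expectedLogLoss_eq [Fintype β] {p : α → ℝ} (hp : ∀ x, 0 < p x) (f : α → β) {q : β → α → ℝ}
    (hq : ∀ x, 0 < q (f x) x) :
    expectedLogLoss p f q
      = ∑ x, p x * (-log (q (f x) x * pushforward p f (f x))) - entropy (pushforward p f) := by
  rw [sub_eq_add_neg, ← sum_mul_log_pushforward_comp, expectedLogLoss, ← sum_add_distrib]
  refine sum_congr rfl fun x _ => ?_
  rw [log_mul (hq x).ne' (pushforward_pos hp f x).ne']
  ring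

lemma entropy_sub_entropy_pushforward_le_expectedLogLoss [Fintype β] {p : α → ℝ}
    (hp : ∀ x, 0 < p x) (f : α → β) {q : β → α → ℝ} (hq0 : ∀ m x, 0 ≤ q m x)
    (hq1 : ∀ m, ∑ x, q m x = 1) (hq : ∀ x, 0 < q (f x) x) :
    entropy p - entropy (pushforward p f) ≤ expectedLogLoss p f q := by
  have hmass : ∑ x, q (f x) x * pushforward p f (f x) ≤ ∑ x, p x := calc
    ∑ x, q (f x) x * pushforward p f (f x)
        = ∑ m, (∑ x with f x = m, q m x) * pushforward p f m :=
          (sum_comp_eq_sum_fiberwise f fun m x => q m x * pushforward p f m).trans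
            (sum_congr rfl fun _ _ => (sum_mul _ _ _).symm)
    _ ≤ ∑ m, pushforward p f m := by
          refine sum_le_sum fun m _ => mul_le_of_le_one_left (sum_nonneg fun x _ => (hp x).le) ?_
          exact hq1 m ▸ sum_le_sum_of_subset_of_nonneg (filter_subset _ _) fun x _ _ => hq0 m x
    _ = ∑ x, p x := sum_pushforward p f
  have hgibbs := entropy_le_sum_mul_neg_log (fun x => (hp x).le)
    (fun x => mul_pos (hq x) (pushforward_pos hp f x)) hmass
  rw [expectedLogLoss_eq hp f hq]
  linarith

section condDecoder

variable {p : α → ℝ} (f : α → β)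

lemma condDecoder_apply_self (hp : ∀ x, 0 < p x) (x : α) :
    condDecoder p f (f x) x = p x / pushforward p f (f x) := by
  simp [condDecoder, (pushforward_pos hp f x).ne']

lemma condDecoder_nonneg (hp : ∀ x, 0 ≤ p x) (m : β) (x : α) : 0 ≤ condDecoder p f m x := by
  unfold condDecoder
  split_ifs
  · exact hp x
  · exact div_nonneg (hp x) (sum_nonneg fun y _ => hp y)
  · exact le_rfl

lemma sum_condDecoder (hp1 : ∑ x, p x = 1) (m : β) : ∑ x, condDecoder p f m x = 1 := by
  unfold condDecoder
  split_ifs with h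
  · exact hp1
  · rw [← sum_filter, ← sum_div]
    exact div_self h

lemma condDecoder_apply_self_pos (hp : ∀ x, 0 < p x) (x : α) : 0 < condDecoder p f (f x) x := by
  rw [condDecoder_apply_self f hp]
  exact div_pos (hp x) (pushforward_pos hp f x)

lemma expectedLogLoss_condDecoder [Fintype β] (hp : ∀ x, 0 < p x) :
    expectedLogLoss p f (condDecoder p f) = entropy p - entropy (pushforward p f) := by
  rw [expectedLogLoss_eq hp f (condDecoder_apply_self_pos f hp), sub_left_inj, entropy]
  refine sum_congr rfl fun x _ => ?_
  rw [condDecoder_apply_self f hp, div_mul_cancel₀ _ (pushforward_pos hp f x).ne', negMulLog]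
  ring

end condDecoder

end LogLossCoding

open LogLossCoding in
theorem stmt_10_general {α : Type*} [Fintype α] (M : ℕ) (hM : 0 < M)
    (pX : α → ℝ) (hp0 : ∀ x, 0 < pX x) (hp1 : ∑ x, pX x = 1) :
    IsLeast { E : ℝ | ∃ (f : α → Fin M) (q : Fin M → α → ℝ),
        (∀ m x, 0 ≤ q m x) ∧ (∀ m, ∑ x, q m x = 1) ∧
        (∀ x, 0 < q (f x) x) ∧                  -- finite log loss on the source
        E = ∑ x, pX x * (-Real.log (q (f x) x)) }
      ((∑ x, negMulLog (pX x))
        - sSup { h : ℝ | ∃ f : α → Fin M,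
            h = ∑ m, negMulLog (∑ x ∈ univ.filter (fun x => f x = m), pX x) }) := by
  have : Nonempty (α → Fin M) := ⟨fun _ => ⟨0, hM⟩⟩
  obtain ⟨f₀, hf₀⟩ := Finite.exists_max fun f : α → Fin M => entropy (pushforward pX f)
  have hmax : IsGreatest {h | ∃ f : α → Fin M, h = entropy (pushforward pX f)}
      (entropy (pushforward pX f₀)) :=
    ⟨⟨f₀, rfl⟩, by rintro _ ⟨f, rfl⟩; exact hf₀ f⟩
  change IsLeast _ (entropy pX - sSup {h | ∃ f : α → Fin M, h = entropy (pushforward pX f)})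
  rw [hmax.csSup_eq]
  refine ⟨⟨f₀, condDecoder pX f₀, condDecoder_nonneg f₀ fun x => (hp0 x).le,
    sum_condDecoder f₀ hp1, condDecoder_apply_self_pos f₀ hp0,
    (expectedLogLoss_condDecoder f₀ hp0).symm⟩, ?_⟩
  rintro _ ⟨f, q, hq0, hq1, hq, rfl⟩
  exact (sub_le_sub_left (hf₀ f) _).trans
    (entropy_sub_entropy_pushforward_le_expectedLogLoss hp0 f hq0 hq1 hq)

/-- The minimum achievable expected logarithmic loss with `M` codewords and
pmf-valued reconstructions is `D*(M) = H(X) − max_{f : 𝒳 → {1,…,M}} H(f(X))`. -/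
theorem stmt_10 {α : Type*} [Fintype α] [DecidableEq α] (M : ℕ) (hM : 0 < M)
    (pX : α → ℝ) (hp0 : ∀ x, 0 < pX x) (hp1 : ∑ x, pX x = 1) :
    IsLeast { E : ℝ | ∃ (f : α → Fin M) (q : Fin M → α → ℝ),
        (∀ m x, 0 ≤ q m x) ∧ (∀ m, ∑ x, q m x = 1) ∧
        (∀ x, 0 < q (f x) x) ∧                  -- finite log loss on the source
        E = ∑ x, pX x * (-Real.log (q (f x) x)) }
      ((∑ x, negMulLog (pX x))
        - sSup { h : ℝ | ∃ f : α → Fin M,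
            h = ∑ m, negMulLog (∑ x ∈ univ.filter (fun x => f x = m), pX x) }) :=
  stmt_10_general M hM pX hp0 hp1
end

section
/- For any encoder f: 𝒳 → {1,…,M} and decoder g: {1,…,M} → ℳ(𝒳), the probability of not exceeding log-loss distortion D satisfies P(−log g(f(X))(X) ≤ D) ≤ P(X ∈ S) for some set S ⊆ 𝒳 with |S| ≤ M·⌊e^D⌋; consequently P(−log g(f(X))(X) ≤ D) ≤ Σ of the M·⌊e^D⌋ largest values of P_X. -/
/-!
A decoder `q m` is a probability mass function, so it gives mass at least `e^{-D}` to at most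
`⌊e^D⌋` symbols. A symbol `x` is reproduced within distortion `D` only if `x` is one of those
symbols for the message `f x`, so the successful symbols form a set of at most `M⌊e^D⌋` elements.
-/

open Real Finset
open scoped Classical

theorem card_filter_inv_le_le_floor {ι : Type*} (s : Finset ι) {q : ι → ℝ}
    (hq0 : ∀ i ∈ s, 0 ≤ q i) (hq1 : ∑ i ∈ s, q i ≤ 1) {c : ℝ} (hc : 0 < c) :
    (s.filter fun i => c⁻¹ ≤ q i).card ≤ ⌊c⌋₊ := by
  set t := s.filter fun i => c⁻¹ ≤ q i
  have hmass : (t.card : ℝ) * c⁻¹ ≤ 1 :=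
    calc (t.card : ℝ) * c⁻¹ = ∑ _i ∈ t, c⁻¹ := by rw [sum_const, nsmul_eq_mul]
      _ ≤ ∑ i ∈ t, q i := sum_le_sum fun i hi => (mem_filter.1 hi).2
      _ ≤ ∑ i ∈ s, q i :=
        sum_le_sum_of_subset_of_nonneg (filter_subset _ _) fun i hi _ => hq0 i hi
      _ ≤ 1 := hq1
  exact Nat.le_floor ((div_le_one₀ hc).mp hmass)

theorem card_filter_comp_le_card_mul {α β : Type*} [Fintype α] [Fintype β]
    (P : β → α → Prop) (f : α → β) {k : ℕ}
    (hP : ∀ b, (univ.filter (P b)).card ≤ k) :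
    (univ.filter fun x => P (f x) x).card ≤ Fintype.card β * k :=
  calc (univ.filter fun x => P (f x) x).card
      ≤ (univ.biUnion fun b => univ.filter (P b)).card :=
        card_le_card fun x hx => mem_biUnion.2 ⟨f x, mem_univ _, by simpa using hx⟩
    _ ≤ ∑ b, (univ.filter (P b)).card := card_biUnion_le
    _ ≤ ∑ _b : β, k := sum_le_sum fun b _ => hP b
    _ = Fintype.card β * k := by rw [sum_const, smul_eq_mul, card_univ]

theorem bddAbove_sums_of_card_le {α : Type*} [Fintype α] (p : α → ℝ) (k : ℕ) :
    BddAbove {s : ℝ | ∃ S : Finset α, S.card ≤ k ∧ s = ∑ x ∈ S, p x} :=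
  (Set.finite_range fun S : Finset α => ∑ x ∈ S, p x).bddAbove.mono
    fun _ ⟨S, _, hs⟩ => Set.mem_range.2 ⟨S, hs.symm⟩

theorem stmt_13_general {α : Type*} [Fintype α] (M : ℕ)
    (pX : α → ℝ)
    (f : α → Fin M)
    (q : Fin M → α → ℝ)
    (hq0 : ∀ m x, 0 ≤ q m x) (hq1 : ∀ m, ∑ x, q m x = 1)
    (D : ℝ) :
    (∃ S : Finset α, S.card ≤ M * ⌊Real.exp D⌋₊ ∧
        ∑ x ∈ univ.filter (fun x => Real.exp (-D) ≤ q (f x) x), pX x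
          ≤ ∑ x ∈ S, pX x) ∧
    ∑ x ∈ univ.filter (fun x => Real.exp (-D) ≤ q (f x) x), pX x
      ≤ sSup { s : ℝ | ∃ S : Finset α, S.card ≤ M * ⌊Real.exp D⌋₊ ∧
          s = ∑ x ∈ S, pX x } := by
  have hcard : (univ.filter fun x => Real.exp (-D) ≤ q (f x) x).card ≤ M * ⌊Real.exp D⌋₊ := by
    simpa only [Real.exp_neg, Fintype.card_fin] using
      card_filter_comp_le_card_mul (fun m x => (Real.exp D)⁻¹ ≤ q m x) f fun m =>
        card_filter_inv_le_le_floor univ (fun x _ => hq0 m x) (hq1 m).le (Real.exp_pos D)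
  exact ⟨⟨_, hcard, le_rfl⟩, le_csSup (bddAbove_sums_of_card_le pX _) ⟨_, hcard, rfl⟩⟩

/-- For any `M`-message scheme under logarithmic loss, the probability of not
exceeding level `D` (i.e. `q^(f(X))(X) ≥ e^{−D}`) is at most `P(X ∈ S)` for some
set `S` of at most `M⌊e^D⌋` symbols; hence it is at most the largest probability
of any set of `M⌊e^D⌋` symbols. -/
theorem stmt_13 {α : Type*} [Fintype α] (M : ℕ)
    (pX : α → ℝ) (hp0 : ∀ x, 0 ≤ pX x) (hp1 : ∑ x, pX x = 1)
    (f : α → Fin M)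
    (q : Fin M → α → ℝ)
    (hq0 : ∀ m x, 0 ≤ q m x) (hq1 : ∀ m, ∑ x, q m x = 1)
    (D : ℝ) (hD : 0 ≤ D) :
    (∃ S : Finset α, S.card ≤ M * ⌊Real.exp D⌋₊ ∧
        ∑ x ∈ univ.filter (fun x => Real.exp (-D) ≤ q (f x) x), pX x
          ≤ ∑ x ∈ S, pX x) ∧
    ∑ x ∈ univ.filter (fun x => Real.exp (-D) ≤ q (f x) x), pX x
      ≤ sSup { s : ℝ | ∃ S : Finset α, S.card ≤ M * ⌊Real.exp D⌋₊ ∧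
          s = ∑ x ∈ S, pX x } :=
  stmt_13_general M pX f q hq0 hq1 D
end

section
/- With 𝒳 = {1,…,r} and P_X(1) ≥ P_X(2) ≥ ⋯ ≥ P_X(r), the minimum excess-distortion probability at log-loss level D with M codewords equals ε*(M,D) = 1 − F_X(M·⌊e^D⌋), where F_X is the CDF of X; it is achieved by f(x) = ⌈x/⌊e^D⌋⌉ and q^(m) uniform on f^{-1}(m) ∩ {1,…,M⌊e^D⌋}. -/
/-!
A decoder `q m` is a probability vector, so at most `⌊e^D⌋` letters `x` have
`q m x ≥ e^{-D}`. Hence a scheme with `M` codewords avoids excess distortion on at most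
`M⌊e^D⌋` letters, and since `P_X` is nonincreasing these carry at most `F_X(M⌊e^D⌋)` of the
mass. Cutting the first `M⌊e^D⌋` letters into `M` blocks of `⌊e^D⌋` consecutive letters and
decoding each block uniformly attains this bound.
-/

open Real Finset

section Rearrangement

variable {ι β : Type*} [AddCommMonoid β] [LinearOrder β] [IsOrderedCancelAddMonoid β]

theorem Finset.sum_le_sum_of_card_le_of_forall_le {p : ι → β} {A B : Finset ι}
    (hcard : #A ≤ #B) (hB : ∀ b ∈ B, 0 ≤ p b) (hAB : ∀ a ∈ A, ∀ b ∈ B, p a ≤ p b) :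
    ∑ a ∈ A, p a ≤ ∑ b ∈ B, p b := by
  rcases B.eq_empty_or_nonempty with rfl | hBne
  · simp [card_eq_zero.mp (Nat.le_zero.mp hcard)]
  obtain ⟨b₀, hb₀, hmin⟩ := B.exists_min_image p hBne
  calc ∑ a ∈ A, p a ≤ #A • p b₀ := sum_le_card_nsmul _ _ _ fun a ha ↦ hAB a ha b₀ hb₀
    _ ≤ #B • p b₀ := nsmul_le_nsmul_left (hB b₀ hb₀) hcard
    _ ≤ ∑ b ∈ B, p b := card_nsmul_le_sum _ _ _ hmin

theorem Fin.sum_le_sum_filter_val_lt_of_antitone {r n : ℕ} {p : Fin r → β}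
    (hp0 : ∀ x, 0 ≤ p x) (hp : Antitone p) {S : Finset (Fin r)} (hS : #S ≤ n) :
    ∑ x ∈ S, p x ≤ ∑ x ∈ univ.filter (fun x : Fin r ↦ (x : ℕ) < n), p x := by
  set T := univ.filter (fun x : Fin r ↦ (x : ℕ) < n)
  have hST : #S ≤ #T := by
    rw [Fin.card_filter_val_lt]
    exact le_min ((card_le_univ S).trans (Fintype.card_fin r).le) hS
  rw [← sum_sdiff_le_sum_sdiff]
  refine sum_le_sum_of_card_le_of_forall_le (card_sdiff_le_card_sdiff_iff.mpr hST)
    (fun b _ ↦ hp0 b) fun a ha b hb ↦ hp (Fin.le_def.mpr ?_)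
  simp only [T, mem_sdiff, mem_filter, mem_univ, true_and] at ha hb
  omega

end Rearrangement

theorem card_filter_le_apply_le_floor_inv {ι : Type*} [Fintype ι] {q : ι → ℝ}
    (hq0 : ∀ x, 0 ≤ q x) (hq1 : ∑ x, q x = 1) {c : ℝ} (hc : 0 < c) :
    #(univ.filter fun x ↦ c ≤ q x) ≤ ⌊c⁻¹⌋₊ := by
  refine Nat.le_floor ?_
  rw [← one_div, le_div_iff₀ hc, ← nsmul_eq_mul, ← hq1]
  exact (card_nsmul_le_sum _ _ _ fun x hx ↦ (mem_filter.mp hx).2).trans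
    (sum_le_sum_of_subset_of_nonneg (subset_univ _) fun x _ _ ↦ hq0 x)

theorem exists_prob_inv_card_le_of_mem {ι : Type*} [Fintype ι] [DecidableEq ι] [Nonempty ι]
    (S : Finset ι) :
    ∃ q : ι → ℝ, (∀ x, 0 ≤ q x) ∧ ∑ x, q x = 1 ∧ ∀ x ∈ S, (#S : ℝ)⁻¹ ≤ q x := by
  rcases S.eq_empty_or_nonempty with rfl | hS
  · refine ⟨fun _ ↦ (Fintype.card ι : ℝ)⁻¹, fun _ ↦ by positivity, ?_, by simp⟩
    rw [sum_const, nsmul_eq_mul, card_univ, mul_inv_cancel₀]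
    exact_mod_cast Fintype.card_ne_zero
  · refine ⟨fun x ↦ if x ∈ S then (#S : ℝ)⁻¹ else 0,
      fun x ↦ by dsimp only; split_ifs <;> positivity, ?_,
      fun x hx ↦ by simp [hx]⟩
    rw [sum_ite_mem, univ_inter, sum_const, nsmul_eq_mul, mul_inv_cancel₀]
    exact_mod_cast hS.card_pos.ne'

theorem exists_encoder_card_fiber_le {r M : ℕ} (hM : 0 < M) (k : ℕ) :
    ∃ f : Fin r → Fin M, ∀ m,
      #(univ.filter fun x : Fin r ↦ (x : ℕ) < M * k ∧ f x = m) ≤ k := by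
  -- the paper's encoder `⌈x / k⌉`, shifted to `0`-indexing and clamped into `Fin M`
  refine ⟨fun x ↦ ⟨min (x / k) (M - 1), by omega⟩, fun m ↦ ?_⟩
  calc #(univ.filter fun x : Fin r ↦ (x : ℕ) < M * k ∧ _ = m)
      ≤ #(Ico ((m : ℕ) * k) (m * k + k)) :=
        card_le_card_of_injOn Fin.val ?_ Fin.val_injective.injOn
    _ = k := by simp
  intro x hx
  simp only [coe_filter, Set.mem_ofPred_eq, mem_univ, true_and, Fin.ext_iff] at hx
  obtain ⟨hlt, hfx⟩ := hx
  have hk : 0 < k := Nat.pos_of_ne_zero (by rintro rfl; simp at hlt)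
  have hdiv : (x : ℕ) / k = m := by
    rw [← hfx, min_eq_left]
    exact Nat.le_sub_one_of_lt ((Nat.div_lt_iff_lt_mul hk).mpr hlt)
  have hmod := Nat.mod_lt x hk
  have hdecomp := Nat.div_add_mod x k
  rw [hdiv, mul_comm] at hdecomp
  simp only [coe_Ico, Set.mem_Ico]
  omega

section Scheme

variable {r M : ℕ} {pX : Fin r → ℝ}

theorem exists_scheme_excess_le (hr : 0 < r) (hM : 0 < M) (hp0 : ∀ x, 0 ≤ pX x)
    (hp1 : ∑ x, pX x = 1) (D : ℝ) :
    ∃ (f : Fin r → Fin M) (q : Fin M → Fin r → ℝ), (∀ m x, 0 ≤ q m x) ∧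
      (∀ m, ∑ x, q m x = 1) ∧
      ∑ x ∈ univ.filter (fun x ↦ q (f x) x < exp (-D)), pX x ≤
        1 - ∑ x ∈ univ.filter (fun x : Fin r ↦ (x : ℕ) < M * ⌊exp D⌋₊), pX x := by
  have : Nonempty (Fin r) := ⟨⟨0, hr⟩⟩
  set k := ⌊exp D⌋₊
  obtain ⟨f, hf⟩ := exists_encoder_card_fiber_le (r := r) hM k
  set S := fun m ↦ univ.filter fun x : Fin r ↦ (x : ℕ) < M * k ∧ f x = m
  choose q hq0 hq1 hqS using fun m ↦ exists_prob_inv_card_le_of_mem (S m)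
  refine ⟨f, q, hq0, hq1, ?_⟩
  have hsub : univ.filter (fun x ↦ q (f x) x < exp (-D)) ⊆
      univ.filter (fun x : Fin r ↦ ¬ (x : ℕ) < M * k) := by
    intro x
    simp only [mem_filter, mem_univ, true_and]
    intro hx hlt
    have hxS : x ∈ S (f x) := by simp [S, hlt]
    have hpos : (0 : ℝ) < #(S (f x)) := by exact_mod_cast card_pos.mpr ⟨x, hxS⟩
    refine hx.not_ge ?_
    calc exp (-D) = (exp D)⁻¹ := exp_neg D
      _ ≤ (#(S (f x)) : ℝ)⁻¹ :=
        inv_anti₀ hpos ((Nat.cast_le.mpr (hf _)).trans (Nat.floor_le (exp_pos D).le))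
      _ ≤ q (f x) x := hqS _ x hxS
  have hsplit := sum_filter_add_sum_filter_not univ (fun x : Fin r ↦ (x : ℕ) < M * k) pX
  have := sum_le_sum_of_subset_of_nonneg hsub fun x _ _ ↦ hp0 x
  linarith

theorem one_sub_sum_filter_val_lt_le_excess (hp0 : ∀ x, 0 ≤ pX x) (hp1 : ∑ x, pX x = 1)
    (hsort : Antitone pX) (D : ℝ) (f : Fin r → Fin M) (q : Fin M → Fin r → ℝ)
    (hq0 : ∀ m x, 0 ≤ q m x) (hq1 : ∀ m, ∑ x, q m x = 1) :
    1 - ∑ x ∈ univ.filter (fun x : Fin r ↦ (x : ℕ) < M * ⌊exp D⌋₊), pX x ≤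
      ∑ x ∈ univ.filter (fun x ↦ q (f x) x < exp (-D)), pX x := by
  set G := univ.filter fun x ↦ exp (-D) ≤ q (f x) x
  have hG : #G ≤ M * ⌊exp D⌋₊ := by
    rw [mul_comm, ← card_fin M]
    refine card_le_mul_card_image_of_maps_to (f := f) (fun _ _ ↦ mem_univ _) _ fun m _ ↦ ?_
    have hm := card_filter_le_apply_le_floor_inv (hq0 m) (hq1 m) (exp_pos (-D))
    rw [exp_neg, inv_inv] at hm
    refine le_trans (card_le_card fun x ↦ ?_) hm
    simp only [G, filter_filter, mem_filter, mem_univ, true_and]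
    rintro ⟨hx, rfl⟩
    rwa [← exp_neg]
  have hsplit := sum_filter_add_sum_filter_not univ (fun x ↦ q (f x) x < exp (-D)) pX
  simp only [not_lt] at hsplit
  have := Fin.sum_le_sum_filter_val_lt_of_antitone hp0 hsort hG
  linarith

end Scheme

/-- `𝒳` is encoded as `Fin r`, so the letter `x` stands for the paper's `x + 1`, and excess
distortion `-log q(x) > D` is written `q(x) < e^{-D}`. -/
theorem stmt_14_general (r M : ℕ) (hr : 0 < r) (hM : 0 < M)
    (pX : Fin r → ℝ) (hp0 : ∀ x, 0 ≤ pX x) (hp1 : ∑ x, pX x = 1)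
    (hsort : ∀ i j : Fin r, i ≤ j → pX j ≤ pX i)
    (D : ℝ) :
    IsLeast { ε : ℝ | ∃ (f : Fin r → Fin M) (q : Fin M → Fin r → ℝ),
        (∀ m x, 0 ≤ q m x) ∧ (∀ m, ∑ x, q m x = 1) ∧
        ε = ∑ x ∈ univ.filter (fun x => q (f x) x < Real.exp (-D)), pX x }
      (1 - ∑ x ∈ univ.filter (fun x : Fin r => (x : ℕ) < M * ⌊Real.exp D⌋₊), pX x) := by
  obtain ⟨f, q, hq0, hq1, hle⟩ := exists_scheme_excess_le hr hM hp0 hp1 D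
  refine ⟨⟨f, q, hq0, hq1, le_antisymm ?_ hle⟩, ?_⟩
  · exact one_sub_sum_filter_val_lt_le_excess hp0 hp1 hsort D f q hq0 hq1
  · rintro _ ⟨f, q, hq0, hq1, rfl⟩
    exact one_sub_sum_filter_val_lt_le_excess hp0 hp1 hsort D f q hq0 hq1

/-- With `𝒳 = {0,…,r−1}` and `P_X` nonincreasing, the minimum excess-distortion
probability at log-loss level `D` with `M` codewords (excess means
`q^(f(x))(x) < e^{−D}`) equals `1 − F_X(M⌊e^D⌋)`. -/
theorem stmt_14 (r M : ℕ) (hr : 0 < r) (hM : 0 < M)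
    (pX : Fin r → ℝ) (hp0 : ∀ x, 0 ≤ pX x) (hp1 : ∑ x, pX x = 1)
    (hsort : ∀ i j : Fin r, i ≤ j → pX j ≤ pX i)
    (D : ℝ) (hD : 0 ≤ D) :
    IsLeast { ε : ℝ | ∃ (f : Fin r → Fin M) (q : Fin M → Fin r → ℝ),
        (∀ m x, 0 ≤ q m x) ∧ (∀ m, ∑ x, q m x = 1) ∧
        ε = ∑ x ∈ univ.filter (fun x => q (f x) x < Real.exp (-D)), pX x }
      (1 - ∑ x ∈ univ.filter (fun x : Fin r => (x : ℕ) < M * ⌊Real.exp D⌋₊), pX x) :=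
  stmt_14_general r M hr hM pX hp0 hp1 hsort D
end

section
/- Let X be a discrete random variable. For any conditional distribution P_{X̂|X} and any D₁ with H(X|X̂) ≤ D₁ ≤ H(X), there exists a random variable Z with X − X̂ − Z a Markov chain and H(X|Z) = D₁. -/
open Real Finset

private lemma scale_term (t a s : ℝ) :
    (t * a) * (-Real.log ((t * a) / (t * s))) = t * (a * (-Real.log (a / s))) := by
  rcases eq_or_ne t 0 with h | h
  · simp [h]
  · rw [mul_div_mul_left a s h]; ring

/-- For any joint distribution of `(X, X̂)` and any `D₁` with
`H(X|X̂) ≤ D₁ ≤ H(X)`, there is a random variable `Z` obtained from `X̂` by a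
channel `K = P_{Z|X̂}` (so `X − X̂ − Z` is a Markov chain) with `H(X|Z) = D₁`. -/
theorem stmt_16 {α β : Type*} [Fintype α] [Fintype β]
    (p : α → β → ℝ)                    -- joint pmf of (X, X̂)
    (hp0 : ∀ x b, 0 ≤ p x b) (hp1 : ∑ x, ∑ b, p x b = 1)
    (D₁ : ℝ)
    -- H(X|X̂) ≤ D₁
    (hlo : ∑ b, ∑ x, p x b * (-Real.log (p x b / ∑ x', p x' b)) ≤ D₁)
    -- D₁ ≤ H(X)
    (hhi : D₁ ≤ ∑ x, negMulLog (∑ b, p x b)) :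
    ∃ (n : ℕ) (K : β → Fin n → ℝ),
      (∀ b z, 0 ≤ K b z) ∧ (∀ b, ∑ z, K b z = 1) ∧
      -- H(X|Z) = D₁, where P_{X,Z}(x,z) = Σ_b p(x,b) K(b,z)
      (∑ z, ∑ x, (∑ b, p x b * K b z) *
          (-Real.log ((∑ b, p x b * K b z) / (∑ x', ∑ b, p x' b * K b z)))
        = D₁) := by
  classical
  set m := Fintype.card β with hm
  let e : β ≃ Fin m := Fintype.equivFin β
  set L : ℝ := ∑ b, ∑ x, p x b * (-Real.log (p x b / ∑ x', p x' b)) with hLdef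
  set Hv : ℝ := ∑ x, negMulLog (∑ b, p x b) with hHdef
  have hLH : L ≤ Hv := le_trans hlo hhi
  set t : ℝ := if Hv = L then 1 else (Hv - D₁) / (Hv - L) with htdef
  have ht0 : 0 ≤ t := by
    rw [htdef]
    split_ifs with h
    · norm_num
    · have hpos : 0 < Hv - L := by
        rcases lt_or_eq_of_le hLH with h' | h'
        · linarith
        · exact absurd h'.symm h
      exact div_nonneg (by linarith) (by linarith)
  have ht1 : t ≤ 1 := by
    rw [htdef]
    split_ifs with h
    · exact le_refl 1
    · have hpos : 0 < Hv - L := by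
        rcases lt_or_eq_of_le hLH with h' | h'
        · linarith
        · exact absurd h'.symm h
      rw [div_le_one hpos]; linarith
  refine ⟨m + 1,
    fun b => Fin.snoc (fun i => if i = e b then t else 0) (1 - t),
    ?_, ?_, ?_⟩
  · intro b z
    refine Fin.lastCases ?_ ?_ z
    · simp only [Fin.snoc_last]; linarith
    · intro i
      simp only [Fin.snoc_castSucc]
      split_ifs
      · exact ht0
      · exact le_refl 0
  · intro b
    rw [Fin.sum_univ_castSucc]
    simp only [Fin.snoc_castSucc, Fin.snoc_last]
    rw [Finset.sum_ite_eq' Finset.univ (e b) (fun _ => t)]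
    simp
  · -- main computation
    have hA : ∀ (x : α) (b' : β),
        (∑ b, p x b * (if e b' = e b then t else 0)) = t * p x b' := by
      intro x b'
      have he : ∀ b : β, (if e b' = e b then t else 0) = if b = b' then t else 0 := by
        intro b
        by_cases hb : b = b'
        · simp [hb]
        · have : e b' ≠ e b := fun h => hb (e.injective h.symm)
          simp [this, hb]
      simp only [he]
      have : ∀ b : β, p x b * (if b = b' then t else 0)
          = if b = b' then p x b * t else 0 := by
        intro b; split_ifs <;> simp
      simp only [this]
      rw [Finset.sum_ite_eq' Finset.univ b' (fun b => p x b * t)]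
      simp [mul_comm]
    have hAlast : ∀ x : α, (∑ b, p x b * (1 - t)) = (1 - t) * ∑ b, p x b := by
      intro x
      rw [Finset.mul_sum]
      exact Finset.sum_congr rfl (fun b _ => mul_comm _ _)
    have hfirst : ∀ b' : β,
        (∑ x, (t * p x b') * (-Real.log ((t * p x b') / (∑ x', t * p x' b'))))
        = t * ∑ x, p x b' * (-Real.log (p x b' / ∑ x', p x' b')) := by
      intro b'
      rw [Finset.mul_sum]
      refine Finset.sum_congr rfl (fun x _ => ?_)
      rw [← Finset.mul_sum]
      exact scale_term t (p x b') (∑ x', p x' b')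
    have hsecond :
        (∑ x, ((1 - t) * ∑ b, p x b) *
          (-Real.log (((1 - t) * ∑ b, p x b) / (∑ x', (1 - t) * ∑ b, p x' b))))
        = (1 - t) * Hv := by
      rw [hHdef, Finset.mul_sum]
      refine Finset.sum_congr rfl (fun x _ => ?_)
      rw [← Finset.mul_sum]
      rw [scale_term (1 - t) (∑ b, p x b) (∑ x', ∑ b, p x' b), hp1, div_one]
      rw [Real.negMulLog]
      ring
    rw [Fin.sum_univ_castSucc]
    simp only [Fin.snoc_castSucc, Fin.snoc_last]
    rw [← Equiv.sum_comp e (fun i => ∑ x, (∑ b, p x b * (if i = e b then t else 0)) *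
        (-Real.log ((∑ b, p x b * (if i = e b then t else 0)) /
          (∑ x', ∑ b, p x' b * (if i = e b then t else 0)))))]
    simp only [hA, hAlast, hfirst, hsecond]
    rw [← Finset.mul_sum, ← hLdef]
    rw [htdef]
    split_ifs with h
    · have hD : D₁ = L := le_antisymm (by rw [← h]; exact hhi) hlo
      rw [hD]; ring
    · have hne : Hv - L ≠ 0 := fun h' => h (by linarith)
      field_simp
      ring
end
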